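/- (Equivalence of the two classical definitions of viscosity subsolution.) Let u:ℝ^d→ℝ be bounded and upper semicontinuous. The following are equivalent: (i) for every bounded C² function φ:ℝ^d→ℝ and every global maximum point x of u−φ, F(x,u(x),∇φ(x),D²φ(x),I_L[x,φ]) ≤ 0; (ii) for every δ∈(0,1), every C² function φ:ℝ^d→ℝ and every point x at which u−φ attains a maximum over the closed ball B̄(x,δ), F(x,u(x),∇φ(x),D²φ(x), I^{1,δ}[x,φ] + I^{2,δ}[x,∇φ(x),u]) ≤ 0. -/

import Mathlib

open scoped RealInnerProductSpace
open Filter Metric MeasureTheory Topology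

/-- The Lévy–Itô operator `I_LI[x,φ]`. -/
noncomputable def ILI {d : ℕ} (μ : Measure (EuclideanSpace ℝ (Fin d)))
    (j : EuclideanSpace ℝ (Fin d) → EuclideanSpace ℝ (Fin d) → EuclideanSpace ℝ (Fin d))
    (x : EuclideanSpace ℝ (Fin d)) (φ : EuclideanSpace ℝ (Fin d) → ℝ) : ℝ :=
  ∫ z, (φ (x + j x z) - φ x -
    ⟪gradient φ x, j x z⟫ *
      (closedBall (0 : EuclideanSpace ℝ (Fin d)) 1).indicator (fun _ => (1:ℝ)) z) ∂μ

/-- The small-jumps part `I^{1,δ}[x,φ]`. -/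
noncomputable def I1 {d : ℕ} (μ : Measure (EuclideanSpace ℝ (Fin d)))
    (j : EuclideanSpace ℝ (Fin d) → EuclideanSpace ℝ (Fin d) → EuclideanSpace ℝ (Fin d))
    (δ : ℝ) (x : EuclideanSpace ℝ (Fin d)) (φ : EuclideanSpace ℝ (Fin d) → ℝ) : ℝ :=
  ∫ z in {z : EuclideanSpace ℝ (Fin d) | ‖z‖ ≤ δ},
    (φ (x + j x z) - φ x - ⟪gradient φ x, j x z⟫) ∂μ

/-- The large-jumps part `I^{2,δ}[x,p,w]`. -/
noncomputable def I2 {d : ℕ} (μ : Measure (EuclideanSpace ℝ (Fin d)))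
    (j : EuclideanSpace ℝ (Fin d) → EuclideanSpace ℝ (Fin d) → EuclideanSpace ℝ (Fin d))
    (δ : ℝ) (x p : EuclideanSpace ℝ (Fin d)) (w : EuclideanSpace ℝ (Fin d) → ℝ) : ℝ :=
  ∫ z in {z : EuclideanSpace ℝ (Fin d) | δ < ‖z‖},
    (w (x + j x z) - w x -
      ⟪p, j x z⟫ * (closedBall (0 : EuclideanSpace ℝ (Fin d)) 1).indicator (fun _ => (1:ℝ)) z) ∂μ

/-- The Hessian matrix of `φ` at `x`. -/
noncomputable def hessM {d : ℕ} (φ : EuclideanSpace ℝ (Fin d) → ℝ)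
    (x : EuclideanSpace ℝ (Fin d)) : Matrix (Fin d) (Fin d) ℝ :=
  Matrix.of fun i j =>
    iteratedFDeriv ℝ 2 φ x ![EuclideanSpace.single i 1, EuclideanSpace.single j 1]

/-- Degenerate ellipticity of `F` (nonincreasing in the matrix and nonlocal slots). -/
def DegEll {d : ℕ}
    (F : EuclideanSpace ℝ (Fin d) → ℝ → EuclideanSpace ℝ (Fin d) →
      Matrix (Fin d) (Fin d) ℝ → ℝ → ℝ) : Prop :=
  ∀ x u p (M N : Matrix (Fin d) (Fin d) ℝ) (l₁ l₂ : ℝ),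
    (M - N).PosSemidef → l₂ ≤ l₁ → F x u p M l₁ ≤ F x u p N l₂

/-- `u` is a (bounded, usc) viscosity subsolution of `F(x,u,∇u,D²u,I_LI[x,u]) = 0`. -/
def IsSubsolution {d : ℕ}
    (F : EuclideanSpace ℝ (Fin d) → ℝ → EuclideanSpace ℝ (Fin d) →
      Matrix (Fin d) (Fin d) ℝ → ℝ → ℝ)
    (μ : Measure (EuclideanSpace ℝ (Fin d)))
    (j : EuclideanSpace ℝ (Fin d) → EuclideanSpace ℝ (Fin d) → EuclideanSpace ℝ (Fin d))
    (u : EuclideanSpace ℝ (Fin d) → ℝ) : Prop :=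
  ∀ φ : EuclideanSpace ℝ (Fin d) → ℝ, ContDiff ℝ 2 φ → (∃ C, ∀ y, |φ y| ≤ C) →
    ∀ x : EuclideanSpace ℝ (Fin d), (∀ y, u y - φ y ≤ u x - φ x) →
      F x (u x) (gradient φ x) (hessM φ x) (ILI μ j x φ) ≤ 0



section HELPERS
variable {d : ℕ}
local notation "E" => EuclideanSpace ℝ (Fin d)

/-- measure of large-jump region is finite -/
lemma measure_gt_lt_top (μ : Measure (EuclideanSpace ℝ (Fin d)))
    (hLevy : ∫⁻ z, ENNReal.ofReal (min (‖z‖ ^ 2) 1) ∂μ < ⊤) {s : ℝ} (hs : 0 < s) :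
    μ {z : E | s < ‖z‖} < ⊤ := by
  set S : Set E := {z : E | s < ‖z‖}
  have hS : MeasurableSet S := (isOpen_lt continuous_const continuous_norm).measurableSet
  set c : ENNReal := ENNReal.ofReal (min (s ^ 2) 1)
  have hc0 : c ≠ 0 := by
    simp only [c, ne_eq, ENNReal.ofReal_eq_zero, not_le]
    positivity
  have key : c * μ S ≤ ∫⁻ z, ENNReal.ofReal (min (‖z‖ ^ 2) 1) ∂μ := by
    calc c * μ S = ∫⁻ _ in S, c ∂μ := by simp [MeasureTheory.setLIntegral_const, mul_comm]
    _ ≤ ∫⁻ z in S, ENNReal.ofReal (min (‖z‖ ^ 2) 1) ∂μ := by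
        refine MeasureTheory.setLIntegral_mono (by fun_prop) ?_
        intro z hz
        refine ENNReal.ofReal_le_ofReal (min_le_min ?_ le_rfl)
        have : s ≤ ‖z‖ := le_of_lt hz
        nlinarith [norm_nonneg (z : E)]
    _ ≤ _ := MeasureTheory.setLIntegral_le_lintegral _ _
  by_contra h
  rw [not_lt, top_le_iff] at h
  rw [h, ENNReal.mul_top hc0] at key
  exact (not_le.2 hLevy) key

/-- integrability from the Lévy domination -/
lemma integrable_of_levy_bound (μ : Measure (EuclideanSpace ℝ (Fin d)))
    (hLevy : ∫⁻ z, ENNReal.ofReal (min (‖z‖ ^ 2) 1) ∂μ < ⊤) {f : E → ℝ} {C : ℝ}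
    (hm : AEStronglyMeasurable f μ) (hb : ∀ z, |f z| ≤ C * min (‖z‖ ^ 2) 1) :
    Integrable f μ := by
  have hb' : ∀ z : E, ‖f z‖ ≤ |C| * min (‖z‖ ^ 2) 1 := fun z =>
    (hb z).trans (mul_le_mul_of_nonneg_right (le_abs_self C) (by positivity))
  refine ⟨hm, ?_⟩
  rw [MeasureTheory.hasFiniteIntegral_iff_norm]
  calc ∫⁻ z, ENNReal.ofReal ‖f z‖ ∂μ
      ≤ ∫⁻ z, ENNReal.ofReal |C| * ENNReal.ofReal (min (‖z‖ ^ 2) 1) ∂μ := by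
        refine MeasureTheory.lintegral_mono fun z => ?_
        rw [← ENNReal.ofReal_mul (abs_nonneg C)]
        exact ENNReal.ofReal_le_ofReal (hb' z)
    _ = ENNReal.ofReal |C| * ∫⁻ z, ENNReal.ofReal (min (‖z‖ ^ 2) 1) ∂μ :=
        MeasureTheory.lintegral_const_mul' _ _ ENNReal.ofReal_ne_top
    _ < ⊤ := ENNReal.mul_lt_top ENNReal.ofReal_lt_top hLevy

lemma integrableOn_gt_of_bounded (μ : Measure (EuclideanSpace ℝ (Fin d)))
    (hLevy : ∫⁻ z, ENNReal.ofReal (min (‖z‖ ^ 2) 1) ∂μ < ⊤) {s : ℝ} (hs : 0 < s)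
    {f : E → ℝ} {C : ℝ} (hm : AEStronglyMeasurable f μ) (hb : ∀ z, |f z| ≤ C) :
    IntegrableOn f {z : E | s < ‖z‖} μ := by
  have hfin := measure_gt_lt_top μ hLevy hs
  refine MeasureTheory.Integrable.mono' (g := fun _ => C) ?_ (hm.restrict) ?_
  · rw [MeasureTheory.integrable_const_iff]
    right
    exact ⟨by rwa [MeasureTheory.Measure.restrict_apply_univ]⟩
  · exact Filter.Eventually.of_forall hb

lemma integral_split (μ : Measure (EuclideanSpace ℝ (Fin d))) {f : E → ℝ}
    (hf : Integrable f μ) (s : ℝ) :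
    ∫ z, f z ∂μ = (∫ z in {z : E | ‖z‖ ≤ s}, f z ∂μ) + ∫ z in {z : E | s < ‖z‖}, f z ∂μ := by
  have hS : MeasurableSet {z : E | ‖z‖ ≤ s} :=
    (isClosed_le continuous_norm continuous_const).measurableSet
  have hcompl : {z : E | ‖z‖ ≤ s}ᶜ = {z : E | s < ‖z‖} := by
    ext z; simp [not_le]
  rw [← MeasureTheory.integral_add_compl hS hf, hcompl]

lemma inner_gradient_eq (φ : E → ℝ) (x z : E) :
    ⟪gradient φ x, z⟫ = fderiv ℝ φ x z := by
  simp [gradient, InnerProductSpace.toDual_symm_apply]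

/-- Second-order Taylor bound on a ball -/
lemma taylor_bound {φ : E → ℝ} (hφ : ContDiff ℝ 2 φ) (x : E) {r : ℝ} (hr : 0 < r) :
    ∃ K : ℝ, 0 ≤ K ∧ ∀ z : E, ‖z‖ ≤ r → |φ (x + z) - φ x - ⟪gradient φ x, z⟫| ≤ K * ‖z‖ ^ 2 := by
  have hφ1 : ContDiff ℝ 1 (fderiv ℝ φ) := hφ.fderiv_right (by norm_num)
  -- bound second derivative on the closed ball
  obtain ⟨L, hL⟩ : ∃ L, ∀ y ∈ closedBall x r, ‖fderiv ℝ (fderiv ℝ φ) y‖ ≤ L := by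
    have hc : ContinuousOn (fun y => ‖fderiv ℝ (fderiv ℝ φ) y‖) (closedBall x r) :=
      (((hφ1.fderiv_right (m := 0) (by norm_num)).continuous).norm).continuousOn
    obtain ⟨L, hL⟩ := (isCompact_closedBall x r).exists_bound_of_continuousOn hc
    refine ⟨L, fun y hy => ?_⟩
    have h1 := hL y hy
    rw [Real.norm_eq_abs] at h1; exact (le_abs_self _).trans h1
  have hL0 : 0 ≤ L := le_trans (norm_nonneg (fderiv ℝ (fderiv ℝ φ) x)) (hL x (mem_closedBall_self hr.le))
  refine ⟨L, hL0, fun z hz => ?_⟩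
  -- first: Lipschitz bound on fderiv on closedBall x ‖z‖
  have hball : closedBall x ‖z‖ ⊆ closedBall x r := closedBall_subset_closedBall hz
  have hlip : ∀ y ∈ closedBall x ‖z‖, ‖fderiv ℝ φ y - fderiv ℝ φ x‖ ≤ L * ‖z‖ := by
    intro y hy
    have := (convex_closedBall x ‖z‖).norm_image_sub_le_of_norm_fderiv_le
      (f := fderiv ℝ φ) (fun w hw => (hφ1.differentiable one_ne_zero).differentiableAt)
      (fun w hw => hL w (hball hw)) (mem_closedBall_self (norm_nonneg z)) hy
    calc ‖fderiv ℝ φ y - fderiv ℝ φ x‖ ≤ L * ‖y - x‖ := this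
      _ ≤ L * ‖z‖ := by
          have : ‖y - x‖ ≤ ‖z‖ := by rwa [← dist_eq_norm, ← mem_closedBall] ;
          exact mul_le_mul_of_nonneg_left this hL0
  -- apply MVT to g y := φ y - fderiv φ x y
  set l : E →L[ℝ] ℝ := fderiv ℝ φ x
  have hgdiff : ∀ y ∈ closedBall x ‖z‖, DifferentiableAt ℝ (fun y => φ y - l y) y :=
    fun y hy => ((hφ.differentiable (by norm_num)).differentiableAt).sub (l.differentiableAt)
  have hgderiv : ∀ y ∈ closedBall x ‖z‖, ‖fderiv ℝ (fun y => φ y - l y) y‖ ≤ L * ‖z‖ := by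
    intro y hy
    have hd : fderiv ℝ (fun y => φ y - l y) y = fderiv ℝ φ y - l := by
      rw [fderiv_fun_sub ((hφ.differentiable (by norm_num)).differentiableAt) l.differentiableAt,
        l.fderiv]
    rw [hd]
    exact hlip y hy
  have key := (convex_closedBall x ‖z‖).norm_image_sub_le_of_norm_fderiv_le hgdiff hgderiv
    (mem_closedBall_self (norm_nonneg z))
    (y := x + z) (by simp [mem_closedBall, dist_eq_norm])
  rw [inner_gradient_eq]
  have : φ (x + z) - l (x + z) - (φ x - l x) = φ (x + z) - φ x - l z := by
    have : l (x + z) = l x + l z := by rw [map_add]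
    rw [this]; ring
  calc |φ (x + z) - φ x - l z| = ‖(φ (x + z) - l (x + z)) - (φ x - l x)‖ := by
        rw [Real.norm_eq_abs, ← this]
    _ ≤ L * ‖z‖ * ‖(x + z) - x‖ := key
    _ = L * ‖z‖ ^ 2 := by simp [add_sub_cancel_left]; ring

/-- Lipschitz approximation from above of a bounded usc function. -/
lemma usc_lipschitz_approx (u : E → ℝ) (hu : UpperSemicontinuous u) {Cu : ℝ}
    (hub : ∀ x, |u x| ≤ Cu) :
    ∃ g : ℕ → E → ℝ, (∀ (n : ℕ), LipschitzWith ((n : NNReal) + 1) (g n)) ∧ (∀ (n : ℕ) (y : E), u y ≤ g n y) ∧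
      (∀ (n : ℕ) (y : E), |g n y| ≤ Cu) ∧ ∀ y, Tendsto (fun n => g n y) atTop (𝓝 (u y)) := by
  have hCu0 : 0 ≤ Cu := le_trans (abs_nonneg _) (hub 0)
  set g : ℕ → E → ℝ := fun n y => ⨆ z : E, (u z - ((n : ℝ) + 1) * dist y z) with hg
  have hbdd : ∀ (n : ℕ) (y : E), BddAbove (Set.range fun z : E => u z - ((n : ℝ) + 1) * dist y z) := by
    intro n y
    refine ⟨Cu, ?_⟩
    rintro a ⟨z, rfl⟩
    dsimp only
    have h1 : u z ≤ Cu := le_trans (le_abs_self _) (hub z)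
    have h2 : 0 ≤ ((n : ℝ) + 1) * dist y z := by positivity
    linarith
  have hle : ∀ (n : ℕ) (y : E), u y ≤ g n y := by
    intro n y
    have := le_ciSup (hbdd n y) y
    simpa using this
  have hCub : ∀ (n : ℕ) (y : E), g n y ≤ Cu := by
    intro n y
    refine ciSup_le fun z => ?_
    have h1 : u z ≤ Cu := le_trans (le_abs_self _) (hub z)
    have h2 : 0 ≤ ((n : ℝ) + 1) * dist y z := by positivity
    linarith
  have habs : ∀ (n : ℕ) (y : E), |g n y| ≤ Cu := by
    intro n y
    rw [abs_le]
    exact ⟨le_trans (neg_le_of_abs_le (hub y)) (hle n y), hCub n y⟩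
  have hlip : ∀ (n : ℕ), LipschitzWith ((n : NNReal) + 1) (g n) := by
    intro n
    refine LipschitzWith.of_dist_le_mul fun y y' => ?_
    have hkey : ∀ a b : E, g n a ≤ g n b + ((n : ℝ) + 1) * dist a b := by
      intro a b
      refine ciSup_le fun z => ?_
      have htri : dist b z ≤ dist b a + dist a z := dist_triangle b a z
      have h1 : u z - ((n : ℝ) + 1) * dist b z ≤ g n b := le_ciSup (hbdd n b) z
      have h2 : ((n : ℝ) + 1) * dist b z ≤ ((n : ℝ) + 1) * (dist b a + dist a z) := by
        apply mul_le_mul_of_nonneg_left htri; positivity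
      have hsymm : dist b a = dist a b := dist_comm b a
      nlinarith [dist_nonneg (x := a) (y := z)]
    rw [Real.dist_eq, abs_sub_le_iff]
    have hcast : (((n : NNReal) + 1 : NNReal) : ℝ) = (n : ℝ) + 1 := by push_cast; ring
    rw [hcast]
    constructor
    · have h := hkey y y'; linarith
    · have h := hkey y' y; rw [dist_comm y' y] at h; linarith
  refine ⟨g, hlip, hle, habs, fun y => ?_⟩
  rw [Metric.tendsto_atTop]
  intro ε hε
  obtain ⟨r, hr0, hr⟩ : ∃ r > 0, ∀ z, dist z y < r → u z < u y + ε / 2 := by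
    have := hu y (u y + ε / 2) (by linarith)
    rw [Metric.eventually_nhds_iff] at this
    obtain ⟨r, hr0, hr⟩ := this
    exact ⟨r, hr0, fun z hz => hr hz⟩
  set N : ℕ := ⌈(2 * Cu) / r⌉₊ with hN
  refine ⟨N, fun n hn => ?_⟩
  have hup : g n y ≤ u y + ε / 2 := by
    refine ciSup_le fun z => ?_
    rcases lt_or_ge (dist y z) r with hdlt | hdge
    · have h1 : u z < u y + ε / 2 := hr z (by rwa [dist_comm])
      have h2 : 0 ≤ ((n : ℝ) + 1) * dist y z := by positivity
      linarith
    · have h1 : u z ≤ Cu := le_trans (le_abs_self _) (hub z)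
      have h2 : ((n : ℝ) + 1) * r ≤ ((n : ℝ) + 1) * dist y z := by
        apply mul_le_mul_of_nonneg_left hdge; positivity
      have h3 : (2 * Cu) / r ≤ (N : ℝ) := Nat.le_ceil _
      have h4 : (N : ℝ) ≤ (n : ℝ) := by exact_mod_cast hn
      have h5 : 2 * Cu ≤ ((n : ℝ) + 1) * r := by
        have : (2 * Cu) / r * r ≤ ((n : ℝ) + 1) * r := by
          apply mul_le_mul_of_nonneg_right _ hr0.le; linarith
        rwa [div_mul_cancel₀ _ (ne_of_gt hr0)] at this
      have h6 : -Cu ≤ u y := neg_le_of_abs_le (hub y)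
      have h7 : 0 < ε / 2 := by linarith
      linarith
  have hlow : u y ≤ g n y := hle n y
  rw [Real.dist_eq, abs_lt]
  constructor <;> linarith

open scoped Convolution in
/-- Smooth approximation from above of a bounded usc function. -/
lemma usc_smooth_approx (u : E → ℝ) (hu : UpperSemicontinuous u) {Cu : ℝ}
    (hub : ∀ x, |u x| ≤ Cu) :
    ∃ h : ℕ → E → ℝ, (∀ n, ContDiff ℝ 2 (h n)) ∧ (∀ (n : ℕ) (y : E), u y ≤ h n y) ∧
      (∀ (n : ℕ) (y : E), |h n y| ≤ Cu + 2) ∧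
      ∀ y, Tendsto (fun n => h n y) atTop (𝓝 (u y)) := by
  obtain ⟨g, hglip, hgle, hgabs, hgtendsto⟩ := usc_lipschitz_approx u hu hub
  have hk : ∀ n : ℕ, (0 : ℝ) < (n : ℝ) + 1 := fun n => by positivity
  set b : ∀ _ : ℕ, ContDiffBump (0 : E) := fun n =>
    ⟨1 / (2 * ((n : ℝ) + 1) ^ 2), 1 / ((n : ℝ) + 1) ^ 2, by positivity, by
      rw [div_lt_div_iff₀ (by positivity) (by positivity)]; nlinarith [hk n]⟩ with hb
  set h : ℕ → E → ℝ := fun n y =>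
    ((b n).normed volume ⋆[ContinuousLinearMap.lsmul ℝ ℝ, volume] g n) y + 1 / ((n : ℝ) + 1)
    with hh
  have hgc : ∀ n : ℕ, Continuous (g n) := fun n => (hglip n).continuous
  have hconv_near : ∀ (n : ℕ) (y : E),
      dist (((b n).normed volume ⋆[ContinuousLinearMap.lsmul ℝ ℝ, volume] g n) y) (g n y)
        ≤ 1 / ((n : ℝ) + 1) := by
    intro n y
    have hlipb : ∀ x ∈ ball y (b n).rOut, dist (g n x) (g n y) ≤ 1 / ((n : ℝ) + 1) := by
      intro x hx
      have h1 : dist (g n x) (g n y) ≤ (((n : NNReal) + 1 : NNReal) : ℝ) * dist x y :=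
        (hglip n).dist_le_mul x y
      have hcast : (((n : NNReal) + 1 : NNReal) : ℝ) = (n : ℝ) + 1 := by push_cast; ring
      rw [hcast] at h1
      have h2 : dist x y < 1 / ((n : ℝ) + 1) ^ 2 := by
        simpa [hb] using mem_ball.1 hx
      calc dist (g n x) (g n y) ≤ ((n : ℝ) + 1) * dist x y := h1
        _ ≤ ((n : ℝ) + 1) * (1 / ((n : ℝ) + 1) ^ 2) := by
            apply mul_le_mul_of_nonneg_left h2.le (hk n).le
        _ = 1 / ((n : ℝ) + 1) := by field_simp
    exact (b n).dist_normed_convolution_le (hgc n).aestronglyMeasurable hlipb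
  refine ⟨h, ?_, ?_, ?_, ?_⟩
  · intro n
    have h2 : ContDiff ℝ (2 : ℕ∞)
        ((b n).normed volume ⋆[ContinuousLinearMap.lsmul ℝ ℝ, volume] g n) :=
      HasCompactSupport.contDiff_convolution_left (μ := volume) (n := 2)
        (ContinuousLinearMap.lsmul ℝ ℝ) ((b n).hasCompactSupport_normed (μ := volume))
        ((b n).contDiff_normed (μ := volume)) ((hgc n).locallyIntegrable)
    exact h2.add contDiff_const
  · intro n y
    have h1 := hconv_near n y
    rw [Real.dist_eq, abs_le] at h1
    have h2 := hgle n y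
    simp only [hh]
    linarith [h1.1]
  · intro n y
    have h1 := hconv_near n y
    rw [Real.dist_eq, abs_le] at h1
    have h2 := hgabs n y
    rw [abs_le] at h2
    have h3 : 1 / ((n : ℝ) + 1) ≤ 1 := by
      rw [div_le_one (hk n)]; linarith [Nat.cast_nonneg (α := ℝ) n]
    have h4 : 0 < 1 / ((n : ℝ) + 1) := by positivity
    simp only [hh]
    rw [abs_le]
    constructor <;> linarith
  · intro y
    have hdiff : Tendsto (fun n : ℕ => h n y - g n y) atTop (𝓝 0) := by
      have hb2 : ∀ n : ℕ, ‖h n y - g n y‖ ≤ 2 * (1 / ((n : ℝ) + 1)) := by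
        intro n
        have h1 := hconv_near n y
        rw [Real.dist_eq, abs_le] at h1
        simp only [hh]
        rw [Real.norm_eq_abs, abs_le]
        constructor <;> [linarith [h1.1]; linarith [h1.2]]
      have hz : Tendsto (fun n : ℕ => 2 * (1 / ((n : ℝ) + 1))) atTop (𝓝 0) := by
        have := tendsto_one_div_add_atTop_nhds_zero_nat (𝕜 := ℝ)
        simpa using this.const_mul 2
      exact squeeze_zero_norm hb2 hz
    have := (hgtendsto y).add hdiff
    simp only [add_zero] at this
    convert this using 2 with n
    ring

lemma hessM_congr {φ ψ : EuclideanSpace ℝ (Fin d) → ℝ} {x : E} (h : φ =ᶠ[𝓝 x] ψ) :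
    hessM φ x = hessM ψ x := by
  have hiter : iteratedFDeriv ℝ 2 φ x = iteratedFDeriv ℝ 2 ψ x := by
    rw [← iteratedFDerivWithin_univ, ← iteratedFDerivWithin_univ]
    refine Filter.EventuallyEq.iteratedFDerivWithin_eq ?_ h.self_of_nhds 2
    rwa [nhdsWithin_univ]
  simp [hessM, hiter]

lemma indicator_one_of_le {z : E} (hz : ‖z‖ ≤ 1) :
    (closedBall (0 : E) 1).indicator (fun _ => (1:ℝ)) z = 1 :=
  Set.indicator_of_mem (by simpa [mem_closedBall, dist_eq_norm] using hz) _

lemma indicator_zero_of_gt {z : E} (hz : 1 < ‖z‖) :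
    (closedBall (0 : E) 1).indicator (fun _ => (1:ℝ)) z = 0 :=
  Set.indicator_of_notMem (by simpa [mem_closedBall, dist_eq_norm, not_le] using hz) _

lemma meas_indicator : Measurable ((closedBall (0 : E) 1).indicator (fun _ => (1:ℝ))) :=
  measurable_const.indicator measurableSet_closedBall

lemma meas_inner (p : E) : Measurable fun z : E => ⟪p, z⟫ :=
  (continuous_const.inner continuous_id).measurable

lemma meas_shift {w : E → ℝ} (hw : Measurable w) (x : E) :
    Measurable fun z : E => w (x + z) :=
  hw.comp (measurable_const_add x)

lemma measurableSet_le_norm (s : ℝ) : MeasurableSet {z : E | ‖z‖ ≤ s} :=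
  (isClosed_le continuous_norm continuous_const).measurableSet

lemma levy_min_lower {δ r : ℝ} (hδ0 : 0 < δ) (hδ1 : δ < 1) (h : δ/2 < r) (hC : 0 ≤ r) :
    δ ^ 2 / 4 ≤ min (r ^ 2) 1 := by
  have h1 : δ ^ 2 / 4 ≤ r ^ 2 := by nlinarith
  have h2 : δ ^ 2 / 4 ≤ 1 := by nlinarith
  exact le_min h1 h2

lemma bound_scale {Cf A δ m : ℝ} (hδ0 : 0 < δ) (hCf0 : 0 ≤ Cf) (hA : 4 * Cf / δ ^ 2 ≤ A)
    (hA0 : 0 ≤ A) (hm : δ ^ 2 / 4 ≤ m) : Cf ≤ A * m := by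
  have hstep : (4 * Cf / δ ^ 2) * (δ ^ 2 / 4) ≤ A * m :=
    mul_le_mul hA hm (by positivity) hA0
  have heqq : (4 * Cf / δ ^ 2) * (δ ^ 2 / 4) = Cf := by field_simp
  linarith

lemma measurableSet_gt_norm (s : ℝ) : MeasurableSet {z : E | s < ‖z‖} :=
  (isOpen_lt continuous_const continuous_norm).measurableSet


end HELPERS

section DIRECTIONS
variable {d : ℕ}
local notation "E" => EuclideanSpace ℝ (Fin d)
local notation "jj" => (fun (_ : EuclideanSpace ℝ (Fin d)) (z : EuclideanSpace ℝ (Fin d)) => z)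

lemma backward_dir (μ : Measure (EuclideanSpace ℝ (Fin d)))
    (hLevy : ∫⁻ z, ENNReal.ofReal (min (‖z‖ ^ 2) 1) ∂μ < ⊤)
    (F : EuclideanSpace ℝ (Fin d) → ℝ → EuclideanSpace ℝ (Fin d) →
      Matrix (Fin d) (Fin d) ℝ → ℝ → ℝ)
    (hFe : DegEll F)
    (u : EuclideanSpace ℝ (Fin d) → ℝ)
    (hu : UpperSemicontinuous u) (hub : ∃ C, ∀ x, |u x| ≤ C)
    (H : ∀ δ : ℝ, 0 < δ → δ < 1 →
      ∀ φ : EuclideanSpace ℝ (Fin d) → ℝ, ContDiff ℝ 2 φ →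
        ∀ x : EuclideanSpace ℝ (Fin d), (∀ y ∈ closedBall x δ, u y - φ y ≤ u x - φ x) →
          F x (u x) (gradient φ x) (hessM φ x)
            (I1 μ jj δ x φ + I2 μ jj δ x (gradient φ x) u) ≤ 0) :
    IsSubsolution F μ jj u := by
  intro φ hφ hφb x hmax
  obtain ⟨Cφ, hCφ⟩ := hφb
  obtain ⟨Cu, hCu⟩ := hub
  set p := gradient φ x with hp
  set ind := (closedBall (0 : E) 1).indicator (fun _ => (1:ℝ)) with hind
  set f : E → ℝ := fun z => φ (x + z) - φ x - ⟪p, z⟫ * ind z with hf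
  obtain ⟨K, hK0, hK⟩ := taylor_bound hφ x (r := 1) one_pos
  -- measurability
  have hφc : Continuous φ := hφ.continuous
  have hfm : AEStronglyMeasurable f μ := by
    refine Measurable.aestronglyMeasurable ?_
    exact ((meas_shift hφc.measurable x).sub measurable_const).sub
      ((meas_inner p).mul meas_indicator)
  -- bound
  have hfb : ∀ z : E, |f z| ≤ max K (2 * Cφ) * min (‖z‖ ^ 2) 1 := by
    intro z
    rcases le_or_gt ‖z‖ 1 with hz | hz
    · have hmin : min (‖z‖ ^ 2) 1 = ‖z‖ ^ 2 := min_eq_left (by nlinarith [norm_nonneg z])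
      have : f z = φ (x + z) - φ x - ⟪p, z⟫ := by
        simp [hf, hind, indicator_one_of_le hz]
      rw [this, hmin]
      calc |φ (x + z) - φ x - ⟪p, z⟫| ≤ K * ‖z‖ ^ 2 := hK z hz
        _ ≤ max K (2 * Cφ) * ‖z‖ ^ 2 := by
            apply mul_le_mul_of_nonneg_right (le_max_left _ _) (by positivity)
    · have hmin : min (‖z‖ ^ 2) 1 = 1 := min_eq_right (by nlinarith)
      have : f z = φ (x + z) - φ x := by
        simp [hf, hind, indicator_zero_of_gt hz]
      rw [this, hmin, mul_one]
      calc |φ (x + z) - φ x| ≤ |φ (x + z)| + |φ x| := abs_sub _ _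
        _ ≤ 2 * Cφ := by linarith [hCφ (x + z), hCφ x]
        _ ≤ max K (2 * Cφ) := le_max_right _ _
  have hfi : Integrable f μ := integrable_of_levy_bound μ hLevy hfm hfb
  -- split
  have hsplit := integral_split μ hfi (1/2 : ℝ)
  have hILI : ILI μ jj x φ = ∫ z, f z ∂μ := by simp [ILI, hf, hind, hp]
  -- small part equals I1
  have hsmall : (∫ z in {z : E | ‖z‖ ≤ 1/2}, f z ∂μ) = I1 μ jj (1/2) x φ := by
    refine MeasureTheory.setIntegral_congr_fun (measurableSet_le_norm _) fun z hz => ?_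
    have hz1 : ‖z‖ ≤ 1 := le_trans hz (by norm_num)
    simp [hf, hind, indicator_one_of_le hz1, I1, hp]
  -- large part dominates I2
  have hlarge : I2 μ jj (1/2) x p u ≤ ∫ z in {z : E | 1/2 < ‖z‖}, f z ∂μ := by
    have hum : Measurable u := hu.measurable
    have hg2m : AEStronglyMeasurable
        (fun z : E => u (x + z) - u x - ⟪p, z⟫ * ind z) μ := by
      refine Measurable.aestronglyMeasurable ?_
      exact ((meas_shift hum x).sub measurable_const).sub ((meas_inner p).mul meas_indicator)
    have hg2b : ∀ z : E, |u (x + z) - u x - ⟪p, z⟫ * ind z| ≤ Cu + Cu + ‖p‖ := by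
      intro z
      have h1 : |⟪p, z⟫ * ind z| ≤ ‖p‖ := by
        rcases le_or_gt ‖z‖ 1 with hz | hz
        · rw [hind, indicator_one_of_le hz, mul_one]
          calc |⟪p, z⟫| ≤ ‖p‖ * ‖z‖ := abs_real_inner_le_norm p z
            _ ≤ ‖p‖ * 1 := by apply mul_le_mul_of_nonneg_left hz (norm_nonneg p)
            _ = ‖p‖ := mul_one _
        · rw [hind, indicator_zero_of_gt hz, mul_zero]
          simpa using norm_nonneg p
      have h2 := hCu (x + z); have h3 := hCu x
      rw [abs_le] at h2 h3 ⊢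
      rw [abs_le] at h1
      constructor <;> linarith
    have hg2i : IntegrableOn (fun z : E => u (x + z) - u x - ⟪p, z⟫ * ind z)
        {z : E | 1/2 < ‖z‖} μ :=
      integrableOn_gt_of_bounded μ hLevy (by norm_num) hg2m hg2b
    have hfiOn : IntegrableOn f {z : E | 1/2 < ‖z‖} μ := hfi.integrableOn
    have hptwise : ∀ z ∈ {z : E | 1/2 < ‖z‖},
        u (x + z) - u x - ⟪p, z⟫ * ind z ≤ f z := by
      intro z _
      have := hmax (x + z)
      simp only [hf]
      linarith
    have := MeasureTheory.setIntegral_mono_on hg2i hfiOn (measurableSet_gt_norm _) hptwise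
    simpa [I2, hind] using this
  -- conclude
  have happ := H (1/2) (by norm_num) (by norm_num) φ hφ x (fun y _ => hmax y)
  have hle : I1 μ jj (1/2) x φ + I2 μ jj (1/2) x p u ≤ ILI μ jj x φ := by
    rw [hILI, hsplit, ← hsmall]
    linarith
  have := hFe x (u x) p (hessM φ x) (hessM φ x) (ILI μ jj x φ)
    (I1 μ jj (1/2) x φ + I2 μ jj (1/2) x p u) (by simpa using Matrix.PosSemidef.zero) hle
  exact le_trans this happ

set_option maxHeartbeats 1000000 in
lemma forward_dir (μ : Measure (EuclideanSpace ℝ (Fin d)))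
    (hLevy : ∫⁻ z, ENNReal.ofReal (min (‖z‖ ^ 2) 1) ∂μ < ⊤)
    (F : EuclideanSpace ℝ (Fin d) → ℝ → EuclideanSpace ℝ (Fin d) →
      Matrix (Fin d) (Fin d) ℝ → ℝ → ℝ)
    (hFc : Continuous fun ξ : EuclideanSpace ℝ (Fin d) × ℝ × EuclideanSpace ℝ (Fin d) ×
      Matrix (Fin d) (Fin d) ℝ × ℝ => F ξ.1 ξ.2.1 ξ.2.2.1 ξ.2.2.2.1 ξ.2.2.2.2)
    (hFe : DegEll F)
    (u : EuclideanSpace ℝ (Fin d) → ℝ)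
    (hu : UpperSemicontinuous u) (hub : ∃ C, ∀ x, |u x| ≤ C)
    (hsub : IsSubsolution F μ jj u) :
    ∀ δ : ℝ, 0 < δ → δ < 1 →
      ∀ φ : EuclideanSpace ℝ (Fin d) → ℝ, ContDiff ℝ 2 φ →
        ∀ x : EuclideanSpace ℝ (Fin d), (∀ y ∈ closedBall x δ, u y - φ y ≤ u x - φ x) →
          F x (u x) (gradient φ x) (hessM φ x)
            (I1 μ jj δ x φ + I2 μ jj δ x (gradient φ x) u) ≤ 0 := by
  intro δ hδ0 hδ1 φ hφ x hmax
  obtain ⟨Cu, hCu⟩ := hub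
  obtain ⟨h, hhC2, hhge, hhb, hht⟩ := usc_smooth_approx u hu hCu
  set p := gradient φ x with hp
  set c : ℝ := u x - φ x with hc
  set ind := (closedBall (0 : E) 1).indicator (fun _ => (1:ℝ)) with hind
  have hum : Measurable u := hu.measurable
  have hφc : Continuous φ := hφ.continuous
  -- the cutoff
  set ζ : ContDiffBump x := ⟨δ/2, 3*δ/4, by positivity, by linarith⟩ with hζ
  have hζ1 : ∀ y ∈ closedBall x (δ/2), (ζ : E → ℝ) y = 1 := by
    intro y hy; exact ζ.one_of_mem_closedBall hy
  have hrOut : ζ.rOut = 3*δ/4 := rfl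
  have hrIn : ζ.rIn = δ/2 := rfl
  have hζ0 : ∀ y : E, δ < dist y x → (ζ : E → ℝ) y = 0 := by
    intro y hy
    exact ζ.zero_of_le_dist (by rw [hrOut]; linarith)
  -- the test functions
  set φn : ℕ → E → ℝ := fun n y => (ζ : E → ℝ) y * φ y + (1 - (ζ : E → ℝ) y) * (h n y - c)
    with hφn
  have hφn_eq : ∀ n, ∀ y ∈ closedBall x (δ/2), φn n y = φ y := by
    intro n y hy; simp [hφn, hζ1 y hy]
  have hφn_ev : ∀ n, φn n =ᶠ[𝓝 x] φ := by
    intro n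
    filter_upwards [closedBall_mem_nhds x (by positivity : (0:ℝ) < δ/2)] with y hy
    exact hφn_eq n y hy
  have hφnx : ∀ n, φn n x = φ x :=
    fun n => hφn_eq n x (mem_closedBall_self (by positivity))
  have hφn_grad : ∀ n, gradient (φn n) x = p := fun n => (hφn_ev n).gradient_eq
  have hφn_hess : ∀ n, hessM (φn n) x = hessM φ x := fun n => hessM_congr (hφn_ev n)
  -- smoothness
  have hζC : ContDiff ℝ 2 (ζ : E → ℝ) := ζ.contDiff
  have hφnC : ∀ n, ContDiff ℝ 2 (φn n) := by
    intro n
    exact (hζC.mul hφ).add ((contDiff_const.sub hζC).mul ((hhC2 n).sub contDiff_const))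
  -- boundedness
  obtain ⟨Mφ, hMφ0, hMφ⟩ : ∃ Mφ, 0 ≤ Mφ ∧ ∀ y ∈ closedBall x δ, |φ y| ≤ Mφ := by
    obtain ⟨M, hM⟩ := (isCompact_closedBall x δ).exists_bound_of_continuousOn hφc.continuousOn
    refine ⟨max M 0, le_max_right _ _, fun y hy => ?_⟩
    have := hM y hy
    rw [Real.norm_eq_abs] at this
    exact le_trans this (le_max_left _ _)
  set Cb : ℝ := Mφ + (Cu + 2 + |c|) with hCb
  have hφnb : ∀ n y, |φn n y| ≤ Cb := by
    intro n y
    have h2 : |(1 - (ζ : E → ℝ) y) * (h n y - c)| ≤ Cu + 2 + |c| := by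
      rw [abs_mul]
      have hz01 : |1 - (ζ : E → ℝ) y| ≤ 1 := by
        rw [abs_le]; constructor <;> [linarith [ζ.le_one (x := y)]; linarith [ζ.nonneg (x := y)]]
      have : |h n y - c| ≤ Cu + 2 + |c| := by
        calc |h n y - c| ≤ |h n y| + |c| := abs_sub _ _
          _ ≤ Cu + 2 + |c| := by linarith [hhb n y]
      calc |1 - (ζ : E → ℝ) y| * |h n y - c| ≤ 1 * |h n y - c| :=
            mul_le_mul_of_nonneg_right hz01 (abs_nonneg _)
        _ = |h n y - c| := one_mul _
        _ ≤ Cu + 2 + |c| := this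
    have h1 : |(ζ : E → ℝ) y * φ y| ≤ Mφ := by
      rcases le_or_gt (dist y x) δ with hy | hy
      · rw [abs_mul]
        have hz01 : |(ζ : E → ℝ) y| ≤ 1 := by
          rw [abs_of_nonneg (ζ.nonneg (x := y))]; exact ζ.le_one
        calc |(ζ : E → ℝ) y| * |φ y| ≤ 1 * |φ y| :=
              mul_le_mul_of_nonneg_right hz01 (abs_nonneg _)
          _ = |φ y| := one_mul _
          _ ≤ Mφ := hMφ y (by rwa [mem_closedBall])
      · rw [hζ0 y hy, zero_mul, abs_zero]; exact hMφ0
    calc |φn n y| ≤ |(ζ : E → ℝ) y * φ y| + |(1 - (ζ : E → ℝ) y) * (h n y - c)| := abs_add_le _ _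
      _ ≤ Cb := by rw [hCb]; linarith
  -- global max
  have hφn_max : ∀ n, ∀ y : E, u y - φn n y ≤ u x - φn n x := by
    intro n y
    rw [hφnx n]
    rcases le_or_gt (dist y x) δ with hy | hy
    · have h1 : 0 ≤ (ζ : E → ℝ) y * (c - (u y - φ y)) :=
        mul_nonneg (ζ.nonneg) (by linarith [hmax y (by rwa [mem_closedBall])])
      have h2 : 0 ≤ (1 - (ζ : E → ℝ) y) * (h n y - u y) :=
        mul_nonneg (by linarith [ζ.le_one (x := y)]) (by linarith [hhge n y])
      simp only [hφn]
      nlinarith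
    · have hz := hζ0 y hy
      simp only [hφn, hz]
      have := hhge n y
      simp only [hc]
      linarith
  -- apply subsolution property
  have hFn : ∀ n, F x (u x) p (hessM φ x) (ILI μ jj x (φn n)) ≤ 0 := by
    intro n
    have := hsub (φn n) (hφnC n) ⟨Cb, hφnb n⟩ x (hφn_max n)
    rwa [hφn_grad n, hφn_hess n] at this
  -- integrands
  have hdistz : ∀ z : E, dist (x + z) x = ‖z‖ := fun z => by
    simp [dist_eq_norm]
  set fn : ℕ → E → ℝ := fun n z => φn n (x + z) - φ x - ⟪p, z⟫ * ind z with hfn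
  set fl : E → ℝ := fun z => (ζ : E → ℝ) (x + z) * φ (x + z) +
      (1 - (ζ : E → ℝ) (x + z)) * (u (x + z) - c) - φ x - ⟪p, z⟫ * ind z with hfl
  have hILIn : ∀ n, ILI μ jj x (φn n) = ∫ z, fn n z ∂μ := by
    intro n
    simp only [ILI, hφn_grad, hφnx, hfn, hind, hp]
  -- pointwise convergence
  have htend : ∀ z : E, Tendsto (fun n => fn n z) atTop (𝓝 (fl z)) := by
    intro z
    have h1 : Tendsto (fun n => h n (x + z)) atTop (𝓝 (u (x + z))) := hht (x + z)
    have h2 : Tendsto (fun n => φn n (x + z)) atTop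
        (𝓝 ((ζ : E → ℝ) (x + z) * φ (x + z) +
          (1 - (ζ : E → ℝ) (x + z)) * (u (x + z) - c))) := by
      exact (((h1.sub_const c).const_mul _).const_add _)
    exact (h2.sub_const (φ x)).sub_const (⟪p, z⟫ * ind z)
  -- uniform domination
  obtain ⟨K, hK0, hK⟩ := taylor_bound hφ x (r := δ/2) (by positivity)
  have hCb0 : 0 ≤ Cb := le_trans (abs_nonneg _) (hφnb 0 x)
  set Cf : ℝ := Cb + |φ x| + ‖p‖ with hCf
  have hCf0 : 0 ≤ Cf := by positivity
  set A : ℝ := max K (4 * Cf / δ ^ 2) with hA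
  have hA0 : 0 ≤ A := le_trans hK0 (le_max_left _ _)
  have hG : ∀ (n : ℕ) (z : E), |fn n z| ≤ A * min (‖z‖ ^ 2) 1 := by
    intro n z
    rcases le_or_gt ‖z‖ (δ/2) with hz | hz
    · have hmem : x + z ∈ closedBall x (δ/2) := by rw [mem_closedBall, hdistz]; exact hz
      have hz1 : ‖z‖ ≤ 1 := le_trans hz (by linarith)
      have heq : fn n z = φ (x + z) - φ x - ⟪p, z⟫ := by
        simp [hfn, hφn_eq n _ hmem, hind, indicator_one_of_le hz1]
      have hmin : min (‖z‖ ^ 2) 1 = ‖z‖ ^ 2 := min_eq_left (by nlinarith [norm_nonneg z])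
      rw [heq, hmin]
      calc |φ (x + z) - φ x - ⟪p, z⟫| ≤ K * ‖z‖ ^ 2 := hK z hz
        _ ≤ A * ‖z‖ ^ 2 := mul_le_mul_of_nonneg_right (le_max_left _ _) (by positivity)
    · have hb1 : |fn n z| ≤ Cf := by
        have h1 : |⟪p, z⟫ * ind z| ≤ ‖p‖ := by
          rcases le_or_gt ‖z‖ 1 with hz1 | hz1
          · rw [hind, indicator_one_of_le hz1, mul_one]
            calc |⟪p, z⟫| ≤ ‖p‖ * ‖z‖ := abs_real_inner_le_norm p z
              _ ≤ ‖p‖ * 1 := mul_le_mul_of_nonneg_left hz1 (norm_nonneg p)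
              _ = ‖p‖ := mul_one _
          · rw [hind, indicator_zero_of_gt hz1, mul_zero]
            simpa using norm_nonneg p
        have h2 : |φn n (x + z)| ≤ Cb := hφnb n (x + z)
        rw [abs_le] at h1 h2
        simp only [hfn]
        rw [abs_le, hCf]
        constructor <;>
          [linarith [neg_abs_le (φ x), le_abs_self (φ x)];
           linarith [neg_abs_le (φ x), le_abs_self (φ x)]]
      exact le_trans hb1 (bound_scale hδ0 hCf0 (le_max_right _ _) hA0
        (levy_min_lower hδ0 hδ1 hz (norm_nonneg z)))
  have hGl : ∀ z : E, |fl z| ≤ A * min (‖z‖ ^ 2) 1 := by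
    intro z
    have := le_of_tendsto ((continuous_abs.tendsto (fl z)).comp (htend z))
      (Filter.Eventually.of_forall fun n => hG n z)
    simpa using this
  -- measurability
  have hfnm : ∀ n, AEStronglyMeasurable (fn n) μ := by
    intro n
    refine Measurable.aestronglyMeasurable ?_
    exact ((meas_shift (hφnC n).continuous.measurable x).sub measurable_const).sub
      ((meas_inner p).mul meas_indicator)
  have hflm : AEStronglyMeasurable fl μ := by
    refine Measurable.aestronglyMeasurable ?_
    have hζm : Measurable fun z : E => (ζ : E → ℝ) (x + z) := meas_shift ζ.continuous.measurable x
    have hφm : Measurable fun z : E => φ (x + z) := meas_shift hφc.measurable x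
    have hunm : Measurable fun z : E => u (x + z) := meas_shift hum x
    exact (((hζm.mul hφm).add ((measurable_const.sub hζm).mul
      (hunm.sub measurable_const))).sub measurable_const).sub
      ((meas_inner p).mul meas_indicator)
  -- dominated convergence
  have hGint : Integrable (fun z : E => A * min (‖z‖ ^ 2) 1) μ := by
    refine integrable_of_levy_bound μ hLevy (C := A) ?_ (fun z => ?_)
    · exact (Measurable.aestronglyMeasurable (by fun_prop))
    · rw [abs_of_nonneg (by positivity)]
  have hIconv : Tendsto (fun n => ∫ z, fn n z ∂μ) atTop (𝓝 (∫ z, fl z ∂μ)) := by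
    refine MeasureTheory.tendsto_integral_of_dominated_convergence _ hfnm hGint ?_ ?_
    · intro n
      exact Filter.Eventually.of_forall fun z => by rw [Real.norm_eq_abs]; exact hG n z
    · exact Filter.Eventually.of_forall htend
  have hflint : Integrable fl μ := integrable_of_levy_bound μ hLevy hflm hGl
  -- split and compare
  have hsplit := integral_split μ hflint δ
  have hlarge : (∫ z in {z : E | δ < ‖z‖}, fl z ∂μ) = I2 μ jj δ x p u := by
    refine MeasureTheory.setIntegral_congr_fun (measurableSet_gt_norm δ) fun z hz => ?_
    have hζz : (ζ : E → ℝ) (x + z) = 0 := hζ0 (x + z) (by rw [hdistz]; exact hz)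
    simp only [hfl, hζz, hc, hind]
    ring_nf
  have hsmall : (∫ z in {z : E | ‖z‖ ≤ δ}, fl z ∂μ) ≤ I1 μ jj δ x φ := by
    obtain ⟨K2, hK20, hK2⟩ := taylor_bound hφ x (r := δ) hδ0
    have hqm : AEStronglyMeasurable (fun z : E => φ (x + z) - φ x - ⟪p, z⟫) μ := by
      refine Measurable.aestronglyMeasurable ?_
      exact ((meas_shift hφc.measurable x).sub measurable_const).sub (meas_inner p)
    have hg0int : Integrable (fun z : E => K2 * min (‖z‖ ^ 2) 1) μ := by
      refine integrable_of_levy_bound μ hLevy (C := K2) ?_ (fun z => ?_)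
      · exact (Measurable.aestronglyMeasurable (by fun_prop))
      · rw [abs_of_nonneg (by positivity)]
    have hqOn : IntegrableOn (fun z : E => φ (x + z) - φ x - ⟪p, z⟫) {z : E | ‖z‖ ≤ δ} μ := by
      refine MeasureTheory.Integrable.mono' (hg0int.restrict) hqm.restrict ?_
      refine (MeasureTheory.ae_restrict_iff' (measurableSet_le_norm δ)).2
        (Filter.Eventually.of_forall fun z hz => ?_)
      have hzd : ‖z‖ ≤ δ := hz
      have hmin : min (‖z‖ ^ 2) 1 = ‖z‖ ^ 2 :=
        min_eq_left (by nlinarith [norm_nonneg z, hzd, hδ1])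
      rw [Real.norm_eq_abs, hmin]
      exact hK2 z hzd
    have hflOn : IntegrableOn fl {z : E | ‖z‖ ≤ δ} μ := hflint.integrableOn
    have hpt : ∀ z ∈ {z : E | ‖z‖ ≤ δ}, fl z ≤ φ (x + z) - φ x - ⟪p, z⟫ := by
      intro z hz
      have hz' : ‖z‖ ≤ δ := hz
      have hmem : x + z ∈ closedBall x δ := by rw [mem_closedBall, hdistz]; exact hz'
      have hu' : u (x + z) - φ (x + z) ≤ c := hmax (x + z) hmem
      have hζ01 : 0 ≤ (ζ : E → ℝ) (x + z) ∧ (ζ : E → ℝ) (x + z) ≤ 1 := ⟨ζ.nonneg, ζ.le_one⟩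
      have hindz : ind z = 1 := by rw [hind]; exact indicator_one_of_le (by linarith)
      have hnn : 0 ≤ (1 - (ζ : E → ℝ) (x + z)) * (φ (x + z) - u (x + z) + c) :=
        mul_nonneg (by linarith [hζ01.2]) (by linarith)
      simp only [hfl, hindz, mul_one]
      nlinarith
    have := MeasureTheory.setIntegral_mono_on hflOn hqOn (measurableSet_le_norm δ) hpt
    simpa [I1, hp] using this
  -- conclusion
  have hLle : ∫ z, fl z ∂μ ≤ I1 μ jj δ x φ + I2 μ jj δ x p u := by
    rw [hsplit, hlarge]; linarith
  have hcont : Continuous fun l : ℝ => F x (u x) p (hessM φ x) l := by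
    have : Continuous fun l : ℝ => ((x, u x, p, hessM φ x, l) :
        EuclideanSpace ℝ (Fin d) × ℝ × EuclideanSpace ℝ (Fin d) ×
        Matrix (Fin d) (Fin d) ℝ × ℝ) := by fun_prop
    exact hFc.comp this
  have hFtend : Tendsto (fun n => F x (u x) p (hessM φ x) (ILI μ jj x (φn n))) atTop
      (𝓝 (F x (u x) p (hessM φ x) (∫ z, fl z ∂μ))) := by
    refine (hcont.tendsto _).comp ?_
    simpa only [hILIn] using hIconv
  have hFstar : F x (u x) p (hessM φ x) (∫ z, fl z ∂μ) ≤ 0 :=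
    le_of_tendsto hFtend (Filter.Eventually.of_forall hFn)
  have := hFe x (u x) p (hessM φ x) (hessM φ x)
    (I1 μ jj δ x φ + I2 μ jj δ x p u) (∫ z, fl z ∂μ)
    (by simpa using Matrix.PosSemidef.zero) hLle
  exact le_trans this hFstar

end DIRECTIONS

/-- equivalence of the two classical definitions of viscosity subsolution,
for the Lévy operator (the Lévy–Itô operator with `j(x,z) = z`). -/
theorem statement12 {d : ℕ} (μ : Measure (EuclideanSpace ℝ (Fin d)))
    (hLevy : ∫⁻ z, ENNReal.ofReal (min (‖z‖ ^ 2) 1) ∂μ < ⊤)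
    (F : EuclideanSpace ℝ (Fin d) → ℝ → EuclideanSpace ℝ (Fin d) →
      Matrix (Fin d) (Fin d) ℝ → ℝ → ℝ)
    (hFc : Continuous fun ξ : EuclideanSpace ℝ (Fin d) × ℝ × EuclideanSpace ℝ (Fin d) ×
      Matrix (Fin d) (Fin d) ℝ × ℝ => F ξ.1 ξ.2.1 ξ.2.2.1 ξ.2.2.2.1 ξ.2.2.2.2)
    (hFe : DegEll F)
    (u : EuclideanSpace ℝ (Fin d) → ℝ)
    (hu : UpperSemicontinuous u) (hub : ∃ C, ∀ x, |u x| ≤ C) :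
    IsSubsolution F μ (fun _ z => z) u ↔
    (∀ δ : ℝ, 0 < δ → δ < 1 →
      ∀ φ : EuclideanSpace ℝ (Fin d) → ℝ, ContDiff ℝ 2 φ →
        ∀ x : EuclideanSpace ℝ (Fin d), (∀ y ∈ closedBall x δ, u y - φ y ≤ u x - φ x) →
          F x (u x) (gradient φ x) (hessM φ x)
            (I1 μ (fun _ z => z) δ x φ + I2 μ (fun _ z => z) δ x (gradient φ x) u) ≤ 0) := by
  constructor
  · intro hsub
    exact forward_dir μ hLevy F hFc hFe u hu hub hsub
  · intro H
    exact backward_dir μ hLevy F hFe u hu hub H
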